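/- Let G be a walk-regular graph with d+1 distinct eigenvalues θ_0 > ... > θ_d (multiplicities m_i) and diameter d, and let π_i = Π_{j ≠ i} |θ_i − θ_j|. Then for every odd index 2i−1 with 1 ≤ 2i−1 ≤ d, α_{d−1}(G) ≤ 1 + m_{2i−1} and α_{d−1}(G) ≤ 1 + m_{2i−1}·π_{2i−1}/π_0. -/

import Mathlib

/-!
Let `E_j` be the orthogonal projection onto the `θ_j`-eigenspace of the adjacency matrix `A` and
`π'_j = ∏_{l ≠ j} (θ_j - θ_l)`, which is `(-1)^j π_j` as the `θ` decrease. The polynomial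
`∏_{l ≠ j} (X - θ_l)` maps `A` to `π'_j E_j`; being monic of degree `d`, it agrees with `A^d`,
which counts walks, at pairs of vertices at distance `d`. Hence for odd `j` the Gram matrix `E_j`
is negative off the diagonal on a `(d-1)`-spread set `S`, and at most `m_j + 1` vectors of an
`m_j`-dimensional space are pairwise obtuse. For the second bound, walk-regularity gives `E_j`
the constant diagonal `m_j / n` and makes `A` regular; then `θ_0` is the degree, its eigenvectors
are constant on components, and `(A^d)_{uv} = π_0 (E_0)_{uv} = π_0 m_0 / n ≥ π_0 / n` on `S`.
Summing `E_j` over `S × S` gives `0 ≤ |S| m_j / n - |S| (|S| - 1) π_0 / (n π_j)`.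
-/

open Matrix Polynomial

/-- The `k`-independence number of a graph. -/
noncomputable def kIndepNum {V : Type*} [Fintype V] (G : SimpleGraph V) (k : ℕ) : ℕ :=
  sSup {r | ∃ s : Finset V, s.card = r ∧ ∀ u ∈ s, ∀ v ∈ s, u ≠ v → k < G.dist u v}

open Finset

section PairwiseObtuse

variable {E ι : Type*} [NormedAddCommGroup E] [InnerProductSpace ℝ E]

lemma eq_zero_of_inner_sum_smul_eq_zero {s : Finset ι} {x : ι → E} {y : E} {w : ι → ℝ}
    (hw : ∀ a ∈ s, 0 ≤ w a) (hxy : ∀ a ∈ s, inner ℝ (x a) y < 0)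
    (h : inner ℝ (∑ a ∈ s, w a • x a) y = 0) : ∀ a ∈ s, w a = 0 := by
  simp only [sum_inner, real_inner_smul_left] at h
  intro a ha
  have hterm := (sum_eq_zero_iff_of_nonpos fun b hb =>
    mul_nonpos_of_nonneg_of_nonpos (hw b hb) (hxy b hb).le).1 h a ha
  exact (mul_eq_zero.1 hterm).resolve_right (hxy a ha).ne

/-- The common value `z` of both sums satisfies `⟪z, z⟫ = ⟪∑_s, ∑_t⟫ ≤ 0`. -/
lemma sum_smul_eq_zero_of_eq_of_inner_neg {s t : Finset ι} {x : ι → E} {w : ι → ℝ}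
    (hx : ∀ a ∈ s, ∀ b ∈ t, inner ℝ (x a) (x b) < 0)
    (hws : ∀ a ∈ s, 0 ≤ w a) (hwt : ∀ b ∈ t, 0 ≤ w b)
    (heq : ∑ a ∈ s, w a • x a = ∑ b ∈ t, w b • x b) : ∑ a ∈ s, w a • x a = 0 := by
  rw [← real_inner_self_nonpos]
  nth_rw 2 [heq]
  simp only [sum_inner, inner_sum, real_inner_smul_left, real_inner_smul_right]
  exact sum_nonpos fun b hb => sum_nonpos fun a ha =>
    mul_nonpos_of_nonneg_of_nonpos (hwt b hb) <|
      mul_nonpos_of_nonneg_of_nonpos (hws a ha) (hx a ha b hb).le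

/-- Removing one vector `x a₀` leaves a linearly independent family: split a dependency into its
positive and negative parts. -/
theorem card_le_finrank_add_one_of_inner_neg [FiniteDimensional ℝ E] [Fintype ι]
    [DecidableEq ι] {x : ι → E} (hx : Pairwise fun a b => inner ℝ (x a) (x b) < 0) :
    Fintype.card ι ≤ Module.finrank ℝ E + 1 := by
  rcases isEmpty_or_nonempty ι with hι | ⟨⟨a₀⟩⟩
  · simp
  have hli : LinearIndependent ℝ fun a : {a // a ≠ a₀} => x a := by
    rw [Fintype.linearIndependent_iff]
    intro g hg a
    set P := univ.filter fun a => 0 < g a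
    set N := univ.filter fun a => ¬0 < g a
    have habs : ∑ a ∈ P, |g a| • x a = ∑ a ∈ N, |g a| • x a := by
      rw [← sub_eq_zero, ← hg, ← sum_filter_add_sum_filter_not univ fun a => 0 < g a,
        sum_congr rfl fun a ha => by rw [abs_of_pos (mem_filter.1 ha).2],
        sum_congr (s₁ := N) rfl fun a ha => by
          rw [abs_of_nonpos (not_lt.1 (mem_filter.1 ha).2), neg_smul], sum_neg_distrib,
        sub_neg_eq_add]
    have hPN : ∀ a ∈ P, ∀ b ∈ N, inner ℝ (x a) (x b) < 0 := fun a ha b hb =>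
      hx fun h => (mem_filter.1 hb).2 (Subtype.ext h ▸ (mem_filter.1 ha).2)
    have hP := sum_smul_eq_zero_of_eq_of_inner_neg hPN (fun a _ => abs_nonneg _)
      (fun a _ => abs_nonneg _) habs
    have hN : ∑ a ∈ N, |g a| • x a = 0 := habs ▸ hP
    have hx₀ : ∀ a : {a // a ≠ a₀}, inner ℝ (x a) (x a₀) < 0 := fun a => hx a.2
    by_cases ha : 0 < g a
    · exact abs_eq_zero.1 <| eq_zero_of_inner_sum_smul_eq_zero (fun a _ => abs_nonneg _)
        (fun a _ => hx₀ a) (by rw [hP, inner_zero_left]) a (mem_filter.2 ⟨mem_univ a, ha⟩)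
    · exact abs_eq_zero.1 <| eq_zero_of_inner_sum_smul_eq_zero (fun a _ => abs_nonneg _)
        (fun a _ => hx₀ a) (by rw [hN, inner_zero_left]) a (mem_filter.2 ⟨mem_univ a, ha⟩)
  have hcard := hli.fintype_card_le_finrank
  rw [Fintype.card_subtype_compl, Fintype.card_subtype_eq] at hcard
  omega

lemma card_le_one_add_div_of_inner_le (s : Finset ι) {x : ι → E} {a b : ℝ} (ha : 0 ≤ a)
    (hb : 0 < b) (hnorm : ∀ u ∈ s, ‖x u‖ ^ 2 = a)
    (hinner : ∀ u ∈ s, ∀ v ∈ s, u ≠ v → inner ℝ (x u) (x v) ≤ -b) :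
    (#s : ℝ) ≤ 1 + a / b := by
  classical
  have hrow : ∀ u ∈ s, ∑ v ∈ s, inner ℝ (x u) (x v) ≤ a - (#s - 1) * b := by
    intro u hu
    rw [← add_sum_erase s _ hu, real_inner_self_eq_norm_sq, hnorm u hu]
    have := sum_le_sum fun v hv => hinner u hu v (mem_of_mem_erase hv) (ne_of_mem_erase hv).symm
    rw [sum_const, card_erase_of_mem hu, nsmul_eq_mul, Nat.cast_pred (card_pos.2 ⟨u, hu⟩)] at this
    linarith
  have hgram : 0 ≤ #s * (a - (#s - 1) * b) := calc
    0 ≤ inner ℝ (∑ u ∈ s, x u) (∑ v ∈ s, x v) := real_inner_self_nonneg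
    _ = ∑ u ∈ s, ∑ v ∈ s, inner ℝ (x u) (x v) := by
      simp only [sum_inner, inner_sum]
      exact sum_comm
    _ ≤ ∑ u ∈ s, (a - (#s - 1) * b) := sum_le_sum hrow
    _ = #s * (a - (#s - 1) * b) := by rw [sum_const, nsmul_eq_mul]
  rcases s.eq_empty_or_nonempty with rfl | hs
  · simp only [card_empty, Nat.cast_zero]
    positivity
  rw [← sub_le_iff_le_add', le_div_iff₀ hb]
  exact sub_nonneg.1 <| (mul_nonneg_iff_of_pos_left (Nat.cast_pos.2 hs.card_pos)).1 hgram

end PairwiseObtuse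

lemma Fin.prod_erase_sub_eq_neg_one_pow_mul_prod_abs {n : ℕ} {θ : Fin n → ℝ}
    (hθ : StrictAnti θ) (i : Fin n) :
    ∏ j ∈ univ.erase i, (θ i - θ j) = (-1) ^ (i : ℕ) * ∏ j ∈ univ.erase i, |θ i - θ j| := by
  have hsign : ∀ j ∈ univ.erase i,
      θ i - θ j = (if j < i then -1 else 1) * |θ i - θ j| := fun j hj => by
    rcases (ne_of_mem_erase hj).lt_or_gt with hji | hij
    · rw [if_pos hji, abs_of_neg (sub_neg.2 (hθ hji)), neg_one_mul, neg_neg]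
    · rw [if_neg hij.not_gt, abs_of_pos (sub_pos.2 (hθ hij)), one_mul]
  have hfilter : (univ.erase i).filter (· < i) = Iio i := by
    ext j
    simpa using ne_of_lt
  rw [prod_congr rfl hsign, prod_mul_distrib, prod_ite, Finset.prod_const, prod_const_one, mul_one,
    hfilter, Fin.card_Iio]

lemma prod_erase_abs_sub_pos {ι : Type*} [Fintype ι] [DecidableEq ι] {θ : ι → ℝ}
    (hθ : Function.Injective θ) (j : ι) : 0 < ∏ l ∈ univ.erase j, |θ j - θ l| :=
  prod_pos fun _ hl => abs_pos.2 (sub_ne_zero.2 (hθ.ne (ne_of_mem_erase hl).symm))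

def Matrix.HasSpectrum {n ι : Type*} [Fintype n] [DecidableEq n] [Fintype ι]
    (A : Matrix n n ℝ) (θ : ι → ℝ) (m : ι → ℕ) : Prop :=
  A.charpoly.roots = univ.val.bind fun j => Multiset.replicate (m j) (θ j)

namespace Matrix.IsHermitian

variable {n : Type*} [Fintype n] [DecidableEq n] {A : Matrix n n ℝ} (hA : A.IsHermitian)

/-- The coordinates of the basis vector `e_u` along the orthonormal eigenvectors for `θ`: their
Gram matrix is the spectral idempotent `E_θ`. -/
noncomputable def eigenCoords (θ : ℝ) (u : n) : EuclideanSpace ℝ {k // hA.eigenvalues k = θ} :=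
  WithLp.toLp 2 fun k => hA.eigenvectorBasis k u

lemma inner_eigenCoords (θ : ℝ) (u v : n) :
    inner ℝ (hA.eigenCoords θ u) (hA.eigenCoords θ v) =
      ∑ k with hA.eigenvalues k = θ, hA.eigenvectorBasis k u * hA.eigenvectorBasis k v := by
  simp only [eigenCoords, PiLp.inner_apply, RCLike.inner_apply, conj_trivial]
  rw [sum_subtype _ (p := fun k => hA.eigenvalues k = θ) (fun k => by simp)]
  exact sum_congr rfl fun k _ => mul_comm _ _

lemma aeval_apply (q : ℝ[X]) (u v : n) :
    aeval A q u v = ∑ k, q.eval (hA.eigenvalues k) *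
      (hA.eigenvectorBasis k u * hA.eigenvectorBasis k v) := by
  rw [← cfc_polynomial q A hA.isSelfAdjoint, hA.cfc_eq, IsHermitian.cfc,
    Unitary.conjStarAlgAut_apply, mul_apply]
  simp only [mul_diagonal, star_eq_conjTranspose, conjTranspose_apply, star_trivial,
    eigenvectorUnitary_apply, Function.comp_apply, RCLike.ofReal_real_eq_id, id]
  exact sum_congr rfl fun k _ => by ring

lemma aeval_apply_eq_mul_inner_eigenCoords {q : ℝ[X]} {θ : ℝ}
    (hq : ∀ k, hA.eigenvalues k ≠ θ → q.eval (hA.eigenvalues k) = 0) (u v : n) :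
    aeval A q u v = q.eval θ * inner ℝ (hA.eigenCoords θ u) (hA.eigenCoords θ v) := by
  rw [aeval_apply, inner_eigenCoords, mul_sum, sum_filter]
  refine sum_congr rfl fun k _ => ?_
  split_ifs with hk
  · rw [hk]
  · rw [hq k hk, zero_mul]

lemma sum_norm_sq_eigenCoords (θ : ℝ) :
    ∑ u, ‖hA.eigenCoords θ u‖ ^ 2 = Fintype.card {k // hA.eigenvalues k = θ} := by
  simp only [← real_inner_self_eq_norm_sq, inner_eigenCoords]
  rw [sum_comm, Fintype.card_subtype, card_eq_sum_ones, Nat.cast_sum, Nat.cast_one]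
  refine sum_congr rfl fun k _ => ?_
  have : inner ℝ (hA.eigenvectorBasis k) (hA.eigenvectorBasis k) = 1 := by
    rw [real_inner_self_eq_norm_sq, hA.eigenvectorBasis.orthonormal.1 k, one_pow]
  simpa only [PiLp.inner_apply, RCLike.inner_apply, conj_trivial] using this

variable {ι : Type*} [Fintype ι] {θ : ι → ℝ} {m : ι → ℕ}

lemma map_eigenvalues_eq_of_hasSpectrum (hspec : A.HasSpectrum θ m) :
    univ.val.map hA.eigenvalues = univ.val.bind fun j => Multiset.replicate (m j) (θ j) := by
  rw [← hspec, hA.roots_charpoly_eq_eigenvalues, RCLike.ofReal_real_eq_id, Function.id_comp]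

lemma exists_eigenvalues_eq_of_hasSpectrum (hspec : A.HasSpectrum θ m) (k : n) :
    ∃ j, hA.eigenvalues k = θ j := by
  have hk := Multiset.mem_map_of_mem hA.eigenvalues (mem_univ_val k)
  rw [hA.map_eigenvalues_eq_of_hasSpectrum hspec] at hk
  obtain ⟨j, -, hj⟩ := Multiset.mem_bind.1 hk
  exact ⟨j, Multiset.eq_of_mem_replicate hj⟩

lemma card_eigenvalues_eq_of_hasSpectrum (hθ : Function.Injective θ)
    (hspec : A.HasSpectrum θ m) (j : ι) :
    Fintype.card {k // hA.eigenvalues k = θ j} = m j := by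
  have hcount := congrArg (Multiset.count (θ j)) (hA.map_eigenvalues_eq_of_hasSpectrum hspec)
  rw [Multiset.count_map, Multiset.count_bind, ← sum_eq_multiset_sum,
    sum_eq_single j (fun l _ hl => by rw [Multiset.count_replicate, if_neg (hθ.ne hl)]) (by simp),
    Multiset.count_replicate_self] at hcount
  rw [Fintype.card_subtype, ← hcount, card_def, filter_val]
  simp only [eq_comm]

variable [DecidableEq ι]

lemma aeval_nodal_erase_apply (hspec : A.HasSpectrum θ m) (j : ι) (u v : n) :
    aeval A (Lagrange.nodal (univ.erase j) θ) u v =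
      (∏ l ∈ univ.erase j, (θ j - θ l)) *
        inner ℝ (hA.eigenCoords (θ j) u) (hA.eigenCoords (θ j) v) := by
  rw [hA.aeval_apply_eq_mul_inner_eigenCoords (θ := θ j) (fun k hk => ?_), Lagrange.eval_nodal]
  obtain ⟨l, hl⟩ := hA.exists_eigenvalues_eq_of_hasSpectrum hspec k
  rw [hl]
  exact Lagrange.eval_nodal_at_node (mem_erase.2 ⟨fun h => hk (h ▸ hl), mem_univ l⟩)

lemma card_mul_norm_sq_eigenCoords (hθ : Function.Injective θ) (hspec : A.HasSpectrum θ m)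
    (hdiag : ∀ p : ℝ[X], ∀ u v : n, aeval A p u u = aeval A p v v) (j : ι) (u : n) :
    Fintype.card n * ‖hA.eigenCoords (θ j) u‖ ^ 2 = m j := by
  have hπ : ∏ l ∈ univ.erase j, (θ j - θ l) ≠ 0 :=
    prod_ne_zero_iff.2 fun l hl => sub_ne_zero.2 (hθ.ne (ne_of_mem_erase hl).symm)
  have hconst : ∀ v, ‖hA.eigenCoords (θ j) v‖ ^ 2 = ‖hA.eigenCoords (θ j) u‖ ^ 2 := fun v => by
    have := hdiag (Lagrange.nodal (univ.erase j) θ) v u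
    rwa [hA.aeval_nodal_erase_apply hspec, hA.aeval_nodal_erase_apply hspec,
      real_inner_self_eq_norm_sq, real_inner_self_eq_norm_sq, mul_right_inj' hπ] at this
  rw [← hA.card_eigenvalues_eq_of_hasSpectrum hθ hspec j, ← sum_norm_sq_eigenCoords,
    sum_congr rfl fun v _ => hconst v, sum_const, card_univ, nsmul_eq_mul]

end Matrix.IsHermitian

lemma exists_card_eq_kIndepNum {V : Type*} [Fintype V] (G : SimpleGraph V) (k : ℕ) :
    ∃ s : Finset V, s.card = kIndepNum G k ∧ ∀ u ∈ s, ∀ v ∈ s, u ≠ v → k < G.dist u v :=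
  Nat.sSup_mem (s := {r | ∃ s : Finset V, s.card = r ∧ ∀ u ∈ s, ∀ v ∈ s, u ≠ v → k < G.dist u v})
    ⟨0, ∅, rfl, by simp⟩ ⟨Fintype.card V, fun _ ⟨s, hs, _⟩ => hs ▸ s.card_le_univ⟩

namespace SimpleGraph

variable {V : Type*} [Fintype V] [DecidableEq V] {G : SimpleGraph V} [DecidableRel G.Adj]

lemma adjMatrix_pow_apply_eq_zero_of_lt_dist {R : Type*} [Semiring R] {l : ℕ} {u v : V}
    (h : l < G.dist u v) : (G.adjMatrix R ^ l) u v = 0 := by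
  have : IsEmpty {p : G.Walk u v | p.length = l} :=
    ⟨fun ⟨p, hp⟩ => (G.dist_le p).not_gt (hp ▸ h)⟩
  rw [adjMatrix_pow_apply_eq_card_walk, Fintype.card_eq_zero, Nat.cast_zero]

lemma one_le_adjMatrix_pow_dist_apply {u v : V} (h : G.Reachable u v) :
    1 ≤ (G.adjMatrix ℝ ^ G.dist u v) u v := by
  obtain ⟨p, hp⟩ := h.exists_walk_length_eq_dist
  rw [adjMatrix_pow_apply_eq_card_walk, Nat.one_le_cast]
  exact Fintype.card_pos_iff.2 ⟨⟨p, hp⟩⟩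

/-- Only the leading term of a polynomial of degree `dist u v` sees a walk from `u` to `v`. -/
lemma aeval_adjMatrix_apply_of_monic {R : Type*} [CommRing R] {q : R[X]} (hq : q.Monic)
    {u v : V} (hdeg : q.natDegree = G.dist u v) :
    aeval (G.adjMatrix R) q u v = (G.adjMatrix R ^ G.dist u v) u v := by
  rw [aeval_eq_sum_range, hdeg, sum_range_succ, Matrix.add_apply, Matrix.sum_apply,
    sum_eq_zero fun l hl => ?_, zero_add, ← hdeg, hq.coeff_natDegree, one_smul]
  rw [Matrix.smul_apply, G.adjMatrix_pow_apply_eq_zero_of_lt_dist (mem_range.1 hl), smul_zero]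

lemma isRegularOfDegree_of_sq_apply_self_eq (u₀ : V)
    (h : ∀ u, (G.adjMatrix ℝ ^ 2) u u = (G.adjMatrix ℝ ^ 2) u₀ u₀) :
    G.IsRegularOfDegree (G.degree u₀) := fun u => by
  simpa only [sq, adjMatrix_mul_self_apply_self, Nat.cast_inj] using h u

lemma lapMatrix_eq_scalar_sub_adjMatrix {r : ℕ} (hreg : G.IsRegularOfDegree r) :
    G.lapMatrix ℝ = scalar V (r : ℝ) - G.adjMatrix ℝ := by
  rw [lapMatrix, degMatrix, scalar_apply]
  congr 2
  exact funext fun u => by rw [hreg u]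

lemma isRoot_charpoly_adjMatrix_of_isRegularOfDegree [Nonempty V] {r : ℕ}
    (hreg : G.IsRegularOfDegree r) : (G.adjMatrix ℝ).charpoly.IsRoot r := by
  rw [IsRoot, eval_charpoly, ← G.lapMatrix_eq_scalar_sub_adjMatrix hreg, det_lapMatrix_eq_zero]

/-- The Laplacian quadratic form `∑_{u ~ v} (f u - f v)²` of `f` equals `(r - μ) ‖f‖² ≤ 0`. -/
lemma eq_of_reachable_of_adjMatrix_mulVec_eq_smul {r : ℕ} (hreg : G.IsRegularOfDegree r)
    {μ : ℝ} (hμ : r ≤ μ) {f : V → ℝ} (hf : G.adjMatrix ℝ *ᵥ f = μ • f) {u v : V}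
    (huv : G.Reachable u v) : f u = f v := by
  refine (G.lapMatrix_toLinearMap₂'_apply'_eq_zero_iff_forall_reachable f).1 ?_ u v huv
  have hform : toLinearMap₂' ℝ (G.lapMatrix ℝ) f f = (r - μ) * (f ⬝ᵥ f) := by
    rw [toLinearMap₂'_apply', G.lapMatrix_eq_scalar_sub_adjMatrix hreg, sub_mulVec, hf,
      scalar_apply, ← smul_one_eq_diagonal, smul_mulVec, one_mulVec, ← sub_smul, dotProduct_smul,
      smul_eq_mul]
  refine le_antisymm ?_ ?_
  · rw [hform]
    exact mul_nonpos_of_nonpos_of_nonneg (sub_nonpos.2 hμ) (dotProduct_self_star_nonneg f)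
  · rw [lapMatrix_toLinearMap₂']
    positivity

variable {d : ℕ} {θ : Fin (d + 1) → ℝ} {m : Fin (d + 1) → ℕ}

lemma exists_degree_eq_of_hasSpectrum [Nonempty V] (hspec : (G.adjMatrix ℝ).HasSpectrum θ m)
    {r : ℕ} (hreg : G.IsRegularOfDegree r) : ∃ j, (r : ℝ) = θ j := by
  have hr := (mem_roots (charpoly_monic _).ne_zero).2
    (G.isRoot_charpoly_adjMatrix_of_isRegularOfDegree hreg)
  rw [hspec] at hr
  obtain ⟨j, -, hj⟩ := Multiset.mem_bind.1 hr
  exact ⟨j, Multiset.eq_of_mem_replicate hj⟩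

lemma adjMatrix_pow_apply_eq_mul_inner_eigenCoords (hspec : (G.adjMatrix ℝ).HasSpectrum θ m)
    (j : Fin (d + 1)) {u v : V} (huv : G.dist u v = d) :
    (G.adjMatrix ℝ ^ d) u v = (∏ l ∈ univ.erase j, (θ j - θ l)) *
      inner ℝ ((G.isHermitian_adjMatrix ℝ).eigenCoords (θ j) u)
        ((G.isHermitian_adjMatrix ℝ).eigenCoords (θ j) v) := by
  have hdeg : (Lagrange.nodal (univ.erase j) θ).natDegree = G.dist u v := by
    rw [Lagrange.natDegree_nodal, card_erase_of_mem (mem_univ j), card_univ, Fintype.card_fin,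
      Nat.add_sub_cancel, huv]
  rw [← (G.isHermitian_adjMatrix ℝ).aeval_nodal_erase_apply hspec,
    G.aeval_adjMatrix_apply_of_monic Lagrange.nodal_monic hdeg, huv]

/-- For the largest eigenvalue the eigenvectors are constant on components, so the Gram entry
at `(u, v)` is the diagonal one, which walk-regularity pins down to `m 0 / |V|`. -/
lemma prod_abs_sub_le_card_mul_adjMatrix_pow_apply (hθ : StrictAnti θ)
    (hspec : (G.adjMatrix ℝ).HasSpectrum θ m)
    (hwr : ∀ p : ℝ[X], ∀ u v : V, aeval (G.adjMatrix ℝ) p u u = aeval (G.adjMatrix ℝ) p v v)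
    {u v : V} (hreach : G.Reachable u v) (huv : G.dist u v = d) :
    ∏ l ∈ univ.erase 0, |θ 0 - θ l| ≤ Fintype.card V * (G.adjMatrix ℝ ^ d) u v := by
  have hA := G.isHermitian_adjMatrix ℝ
  have : Nonempty V := ⟨u⟩
  have hreg := G.isRegularOfDegree_of_sq_apply_self_eq u fun w => by
    have := hwr (X ^ 2) w u
    rwa [aeval_X_pow] at this
  obtain ⟨j, hj⟩ := exists_degree_eq_of_hasSpectrum hspec hreg
  have hcoords : hA.eigenCoords (θ 0) v = hA.eigenCoords (θ 0) u := by
    ext k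
    refine (G.eq_of_reachable_of_adjMatrix_mulVec_eq_smul hreg ?_
      (hA.mulVec_eigenvectorBasis k) hreach).symm
    rw [k.2, hj]
    exact hθ.antitone (Fin.zero_le j)
  have hsign : ∏ l ∈ univ.erase 0, (θ 0 - θ l) = ∏ l ∈ univ.erase 0, |θ 0 - θ l| := by
    simpa using Fin.prod_erase_sub_eq_neg_one_pow_mul_prod_abs hθ 0
  have heq : Fintype.card V * (G.adjMatrix ℝ ^ d) u v =
      (∏ l ∈ univ.erase 0, |θ 0 - θ l|) * m 0 := by
    rw [adjMatrix_pow_apply_eq_mul_inner_eigenCoords hspec 0 huv, hcoords,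
      real_inner_self_eq_norm_sq, mul_left_comm,
      hA.card_mul_norm_sq_eigenCoords hθ.injective hspec hwr, hsign]
  have hwalk := G.one_le_adjMatrix_pow_dist_apply hreach
  rw [huv] at hwalk
  have hm : 0 < m 0 := Nat.pos_of_ne_zero fun h0 => by
    have := mul_pos (Nat.cast_pos.2 (Fintype.card_pos (α := V))) (one_pos.trans_le hwalk)
    rw [heq, h0, Nat.cast_zero, mul_zero] at this
    exact this.false
  rw [heq]
  exact le_mul_of_one_le_right (prod_nonneg fun _ _ => abs_nonneg _) (Nat.one_le_cast.2 hm)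

lemma inner_eigenCoords_le_of_odd (hθ : StrictAnti θ) (hspec : (G.adjMatrix ℝ).HasSpectrum θ m)
    (hwr : ∀ p : ℝ[X], ∀ u v : V, aeval (G.adjMatrix ℝ) p u u = aeval (G.adjMatrix ℝ) p v v)
    {i : Fin (d + 1)} (hi : Odd (i : ℕ)) {u v : V} (hreach : G.Reachable u v)
    (huv : G.dist u v = d) :
    inner ℝ ((G.isHermitian_adjMatrix ℝ).eigenCoords (θ i) u)
        ((G.isHermitian_adjMatrix ℝ).eigenCoords (θ i) v) ≤
      -((∏ l ∈ univ.erase 0, |θ 0 - θ l|) / Fintype.card V / ∏ l ∈ univ.erase i, |θ i - θ l|) := by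
  have hpow := adjMatrix_pow_apply_eq_mul_inner_eigenCoords hspec i huv
  rw [Fin.prod_erase_sub_eq_neg_one_pow_mul_prod_abs hθ, hi.neg_one_pow] at hpow
  have hwalk := prod_abs_sub_le_card_mul_adjMatrix_pow_apply hθ hspec hwr hreach huv
  rw [hpow] at hwalk
  have hV : (0 : ℝ) < Fintype.card V := Nat.cast_pos.2 (Fintype.card_pos_iff.2 ⟨u⟩)
  rw [le_neg, div_le_iff₀ (prod_erase_abs_sub_pos hθ.injective i), div_le_iff₀ hV]
  linear_combination hwalk

end SimpleGraph

/-- **Theorem (odd indices).** Let `G` be walk-regular with `d+1` distinct eigenvalues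
`θ_0 > ⋯ > θ_d` (multiplicities `m_i`) and diameter `d`, and let
`π_i = Π_{j ≠ i} |θ_i − θ_j|`. Then for every odd index `2i−1` with `1 ≤ 2i−1 ≤ d`,
`α_{d−1}(G) ≤ 1 + m_{2i−1}` and `α_{d−1}(G) ≤ 1 + m_{2i−1}·π_{2i−1}/π_0`. -/
theorem stmt13 {V : Type*} [Fintype V] [DecidableEq V] (G : SimpleGraph V)
    [DecidableRel G.Adj] (d : ℕ) (hd : 1 ≤ d)
    (θ : Fin (d + 1) → ℝ) (hθ : StrictAnti θ) (m : Fin (d + 1) → ℕ)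
    (hroots : (G.adjMatrix ℝ).charpoly.roots =
      Finset.univ.val.bind fun i => Multiset.replicate (m i) (θ i))
    (hwr : ∀ p : Polynomial ℝ, ∀ u v : V,
      (Polynomial.aeval (G.adjMatrix ℝ) p) u u = (Polynomial.aeval (G.adjMatrix ℝ) p) v v)
    (hdiam : (∀ u v : V, G.dist u v ≤ d) ∧ ∃ u v : V, G.dist u v = d) :
    ∀ i : Fin (d + 1), Odd (i : ℕ) →
      kIndepNum G (d - 1) ≤ 1 + m i ∧
      (kIndepNum G (d - 1) : ℝ) ≤ 1 + (m i : ℝ) *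
        (∏ j ∈ Finset.univ.erase i, |θ i - θ j|) /
        (∏ j ∈ Finset.univ.erase (0 : Fin (d + 1)), |θ 0 - θ j|) := by
  intro i hi
  have hA := G.isHermitian_adjMatrix ℝ
  obtain ⟨u₀, -⟩ := hdiam.2
  have hV : (0 : ℝ) < Fintype.card V := Nat.cast_pos.2 (Fintype.card_pos_iff.2 ⟨u₀⟩)
  have hb := div_pos (div_pos (prod_erase_abs_sub_pos hθ.injective 0) hV)
    (prod_erase_abs_sub_pos hθ.injective i)
  obtain ⟨S, hS_card, hS⟩ := exists_card_eq_kIndepNum G (d - 1)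
  have hinner : ∀ u ∈ S, ∀ v ∈ S, u ≠ v → _ := fun u hu v hv huv => by
    have hdist : G.dist u v = d := le_antisymm (hdiam.1 u v) (by have := hS u hu v hv huv; omega)
    exact SimpleGraph.inner_eigenCoords_le_of_odd hθ hroots hwr hi
      (.of_dist_ne_zero (by omega)) hdist
  constructor
  · have := card_le_finrank_add_one_of_inner_neg (x := fun u : S => hA.eigenCoords (θ i) u)
      fun u v huv => (hinner u u.2 v v.2 (Subtype.coe_ne_coe.2 huv)).trans_lt (neg_neg_of_pos hb)
    rwa [finrank_euclideanSpace, hA.card_eigenvalues_eq_of_hasSpectrum hθ.injective hroots,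
      Fintype.card_coe, hS_card, add_comm] at this
  · rw [← hS_card]
    convert card_le_one_add_div_of_inner_le S (a := m i / Fintype.card V) (by positivity) hb
      (fun u _ => by
        rw [eq_div_iff hV.ne', mul_comm,
          hA.card_mul_norm_sq_eigenCoords hθ.injective hroots hwr])
      hinner using 2
    field_simp
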